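/- arXiv:0906.1934 — 3 statements merged into one kernel-verified Lean document; each statement's English description precedes it below -/
import Mathlib

section
/- Let G be a finitely generated abelian group and let ĥ : G → ℝ be a nonnegative function satisfying the parallelogram law ĥ(x+y) + ĥ(x-y) = 2ĥ(x) + 2ĥ(y) for all x, y ∈ G. Suppose ĥ vanishes exactly on the torsion subgroup of G, and let m > 0 be such that ĥ(P) ≥ m for every non-torsion P ∈ G. Let N be a positive integer divisible by the exponent of the torsion subgroup of G with N² · m > 4H'. Then any two elements Q, Q' ∈ G with Q - Q' ∈ N·G and ĥ(Q) ≤ H', ĥ(Q') ≤ H' satisfy Q = Q'. -/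
theorem stmt_1 (G : Type*) [AddCommGroup G] [AddGroup.FG G]
    (h : G → ℝ) (hnn : ∀ x, 0 ≤ h x)
    (hpar : ∀ x y, h (x + y) + h (x - y) = 2 * h x + 2 * h y)
    (hz : ∀ x, h x = 0 ↔ IsOfFinAddOrder x)
    (m H' : ℝ) (hm : 0 < m)
    (hmin : ∀ P : G, ¬ IsOfFinAddOrder P → m ≤ h P)
    (N : ℕ) (hN : 0 < N)
    (hexp : AddMonoid.exponent (AddCommGroup.torsion G) ∣ N)
    (hNm : 4 * H' < (N : ℝ) ^ 2 * m)
    (Q Q' : G) (hQQ : ∃ g : G, Q - Q' = N • g)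
    (hQ : h Q ≤ H') (hQ' : h Q' ≤ H') : Q = Q' := by
  obtain ⟨g, hg⟩ := hQQ
  have h0 : h 0 = 0 := (hz 0).mpr IsOfFinAddOrder.zero
  have hneg : ∀ x, h (-x) = h x := by
    intro x
    have := hpar 0 x
    simp [h0] at this
    linarith
  -- h (n • x) = n^2 * h x
  have hsq : ∀ (n : ℕ) (x : G), h (n • x) = (n : ℝ) ^ 2 * h x := by
    intro n x
    induction n using Nat.strong_induction_on with
    | _ n ih =>
      match n with
      | 0 => simp [h0]
      | 1 => simp
      | (k + 2) =>
        have h1 := ih (k + 1) (by omega)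
        have h2 := ih k (by omega)
        have := hpar ((k + 1) • x) x
        have e1 : (k + 1) • x + x = (k + 2) • x := by
          rw [add_smul, add_smul]; abel
        have e2 : (k + 1) • x - x = k • x := by
          rw [add_smul]; abel
        rw [e1, e2, h1, h2] at this
        push_cast
        push_cast at this
        nlinarith
  -- h (Q - Q') ≤ 4 H'
  have hdiff : h (Q - Q') ≤ 4 * H' := by
    have := hpar Q Q'
    have := hnn (Q + Q')
    linarith
  -- g is torsion
  have hgt : IsOfFinAddOrder g := by
    by_contra hng
    have hmg := hmin g hng
    have : h (N • g) = (N : ℝ) ^ 2 * h g := hsq N g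
    rw [← hg] at this
    have hN2 : (0 : ℝ) < (N : ℝ) ^ 2 := by positivity
    nlinarith
  -- N • g = 0 since order divides exponent of torsion divides N
  have hNg : N • g = 0 := by
    have hmem : g ∈ AddCommGroup.torsion G := hgt
    have hdvd : addOrderOf (⟨g, hmem⟩ : AddCommGroup.torsion G) ∣
        AddMonoid.exponent (AddCommGroup.torsion G) :=
      AddMonoid.addOrder_dvd_exponent _
    rw [AddSubgroup.addOrderOf_mk] at hdvd
    exact addOrderOf_dvd_iff_nsmul_eq_zero.mp (hdvd.trans hexp)
  rw [hNg] at hg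
  exact sub_eq_zero.mp hg
end

section
/- Let R be a discrete valuation ring with uniformizer π and 2 invertible in R. Suppose F(x) = f_6 x^6 + f_5 x^5 + ... + f_1 x + f_0 ∈ R[x], and a_0, a_1, b_0, b_1 ∈ R are such that x² + a_1 x + a_0 divides F(x) - (b_1 x + b_0)² in R[x]. If π divides f_0, f_1, and a_0, but π² does not divide f_0, then π divides a_1 and b_0, and π does not divide f_2 - b_1². -/
/-!
Write `A = X² + a₁X + a₀`, `B = b₁X + b₀` and `F - B² = A·Q` with `Q = q₀ + q₁X + q₂X² + ⋯`,
and compare coefficients in degrees 0, 1, 2. Degree 0 gives `f₀ - b₀² = a₀q₀`, so `π ∣ b₀`;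
since `π² ∤ f₀` while `π² ∣ b₀²`, this also forces `π ∤ q₀`. Degree 1, `f₁ - 2b₀b₁ = a₀q₁ + a₁q₀`,
then gives `π ∣ a₁q₀`, hence `π ∣ a₁`. Finally degree 2 reads `f₂ - b₁² = a₀q₂ + a₁q₁ + q₀ ≡ q₀`
modulo `π`.
-/

open Polynomial

section Coefficients

variable {R : Type*} [CommRing R]

lemma coeff_quadratic_mul_zero (a1 a0 : R) (Q : R[X]) :
    ((X ^ 2 + C a1 * X + C a0) * Q).coeff 0 = a0 * Q.coeff 0 := by
  simp [add_mul, mul_assoc]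

lemma coeff_quadratic_mul_one (a1 a0 : R) (Q : R[X]) :
    ((X ^ 2 + C a1 * X + C a0) * Q).coeff 1 = a0 * Q.coeff 1 + a1 * Q.coeff 0 := by
  simp [add_mul, mul_assoc, coeff_X_pow_mul', coeff_X_mul]
  ring

lemma coeff_quadratic_mul_two (a1 a0 : R) (Q : R[X]) :
    ((X ^ 2 + C a1 * X + C a0) * Q).coeff 2 = a0 * Q.coeff 2 + a1 * Q.coeff 1 + Q.coeff 0 := by
  simp [add_mul, mul_assoc, coeff_X_pow_mul', coeff_X_mul]
  ring

variable (f0 f1 f2 f3 f4 f5 f6 b0 b1 : R)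

lemma coeff_sextic_sub_sq_zero :
    ((C f6 * X ^ 6 + C f5 * X ^ 5 + C f4 * X ^ 4 + C f3 * X ^ 3 + C f2 * X ^ 2
      + C f1 * X + C f0) - (C b1 * X + C b0) ^ 2).coeff 0 = f0 - b0 ^ 2 := by
  simp [sq, add_mul, mul_add, coeff_X_pow, coeff_X, coeff_C, mul_assoc]

lemma coeff_sextic_sub_sq_one :
    ((C f6 * X ^ 6 + C f5 * X ^ 5 + C f4 * X ^ 4 + C f3 * X ^ 3 + C f2 * X ^ 2
      + C f1 * X + C f0) - (C b1 * X + C b0) ^ 2).coeff 1 = f1 - 2 * b0 * b1 := by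
  simp [sq, add_mul, mul_add, coeff_X_pow, coeff_X, coeff_C, mul_assoc, coeff_X_mul]
  ring

lemma coeff_sextic_sub_sq_two :
    ((C f6 * X ^ 6 + C f5 * X ^ 5 + C f4 * X ^ 4 + C f3 * X ^ 3 + C f2 * X ^ 2
      + C f1 * X + C f0) - (C b1 * X + C b0) ^ 2).coeff 2 = f2 - b1 ^ 2 := by
  simp [sq, add_mul, mul_add, coeff_X_pow, coeff_X, coeff_C, mul_assoc, coeff_X_mul]

end Coefficients

theorem dvd_and_dvd_and_not_dvd_of_coeff_relations {R : Type*} [CommRing R]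
    {p f0 f1 f2 a0 a1 b0 b1 c0 c1 c2 : R} (hp : Prime p)
    (h0 : p ∣ f0) (h1 : p ∣ f1) (ha0 : p ∣ a0) (h0' : ¬ p ^ 2 ∣ f0)
    (e0 : f0 - b0 ^ 2 = a0 * c0) (e1 : f1 - 2 * b0 * b1 = a0 * c1 + a1 * c0)
    (e2 : f2 - b1 ^ 2 = a0 * c2 + a1 * c1 + c0) :
    p ∣ a1 ∧ p ∣ b0 ∧ ¬ p ∣ f2 - b1 ^ 2 := by
  have hb0 : p ∣ b0 := by
    refine hp.dvd_of_dvd_pow (n := 2) ?_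
    rw [show b0 ^ 2 = f0 - a0 * c0 by rw [← e0]; ring]
    exact dvd_sub h0 (ha0.mul_right c0)
  have hc0 : ¬ p ∣ c0 := fun hc ↦ h0' <| by
    rw [show f0 = b0 ^ 2 + a0 * c0 by rw [← e0]; ring]
    exact dvd_add (pow_dvd_pow_of_dvd hb0 2) (sq p ▸ mul_dvd_mul ha0 hc)
  have ha1 : p ∣ a1 := by
    refine (hp.dvd_or_dvd ?_).resolve_right hc0
    rw [show a1 * c0 = f1 - 2 * b0 * b1 - a0 * c1 by rw [e1]; ring]
    exact dvd_sub (dvd_sub h1 ((hb0.mul_left 2).mul_right b1)) (ha0.mul_right c1)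
  refine ⟨ha1, hb0, fun hd ↦ hc0 ?_⟩
  rw [show c0 = f2 - b1 ^ 2 - a0 * c2 - a1 * c1 by rw [e2]; ring]
  exact dvd_sub (dvd_sub hd (ha0.mul_right c2)) (ha1.mul_right c1)

open Polynomial in
theorem stmt_9_general {R : Type*} [CommRing R] [IsDomain R] [IsDiscreteValuationRing R]
    (π : R) (hπ : Irreducible π)
    (f0 f1 f2 f3 f4 f5 f6 a0 a1 b0 b1 : R)
    (hdiv : (X ^ 2 + C a1 * X + C a0) ∣
      ((C f6 * X ^ 6 + C f5 * X ^ 5 + C f4 * X ^ 4 + C f3 * X ^ 3 + C f2 * X ^ 2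
          + C f1 * X + C f0) - (C b1 * X + C b0) ^ 2))
    (h0 : π ∣ f0) (h1 : π ∣ f1) (ha0 : π ∣ a0) (h0' : ¬ π ^ 2 ∣ f0) :
    π ∣ a1 ∧ π ∣ b0 ∧ ¬ π ∣ (f2 - b1 ^ 2) := by
  obtain ⟨Q, hQ⟩ := hdiv
  have coeff_eq (n : ℕ) := congrArg (coeff · n) hQ
  have e0 := coeff_eq 0
  have e1 := coeff_eq 1
  have e2 := coeff_eq 2
  rw [coeff_sextic_sub_sq_zero, coeff_quadratic_mul_zero] at e0
  rw [coeff_sextic_sub_sq_one, coeff_quadratic_mul_one] at e1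
  rw [coeff_sextic_sub_sq_two, coeff_quadratic_mul_two] at e2
  exact dvd_and_dvd_and_not_dvd_of_coeff_relations hπ.prime h0 h1 ha0 h0' e0 e1 e2

open Polynomial in
theorem stmt_9 {R : Type*} [CommRing R] [IsDomain R] [IsDiscreteValuationRing R]
    (π : R) (hπ : Irreducible π) (h2 : IsUnit (2 : R))
    (f0 f1 f2 f3 f4 f5 f6 a0 a1 b0 b1 : R)
    (hdiv : (X ^ 2 + C a1 * X + C a0) ∣
      ((C f6 * X ^ 6 + C f5 * X ^ 5 + C f4 * X ^ 4 + C f3 * X ^ 3 + C f2 * X ^ 2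
          + C f1 * X + C f0) - (C b1 * X + C b0) ^ 2))
    (h0 : π ∣ f0) (h1 : π ∣ f1) (ha0 : π ∣ a0) (h0' : ¬ π ^ 2 ∣ f0) :
    π ∣ a1 ∧ π ∣ b0 ∧ ¬ π ∣ (f2 - b1 ^ 2) :=
  stmt_9_general π hπ f0 f1 f2 f3 f4 f5 f6 a0 a1 b0 b1 hdiv h0 h1 ha0 h0'
end

section
/- Let R be a discrete valuation ring with field of fractions L, valuation v, and 2 invertible. Let F ∈ R[x] have degree at most 6 with all coefficients in R. Suppose a_0, a_1 ∈ R and b_0, b_1 ∈ L are such that x² + a_1 x + a_0 divides F(x) - (b_1 x + b_0)² in L[x], and not both b_0 and b_1 lie in R. Then v(b_1) < 0 and π² divides the discriminant a_1² - 4a_0 of x² + a_1 x + a_0, where π is a uniformizer. -/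
/-!
Reducing `F` modulo the monic quadratic `A = x² + a₁x + a₀` gives `F ≡ α₁x + α₀ (mod A)` with
`α₀, α₁ ∈ R`, so `A` divides `α₁x + α₀ - (b₁x + b₀)²` over `L`; comparing coefficients,
`α₁ = 2b₀b₁ - a₁b₁²` and `α₀ = b₀² - a₀b₁²`. If `b₁` were integral, so would be `b₀`, since
`b₀² = α₀ + a₀b₁²` and `R` is integrally closed. Hence `b₁⁻¹ = πe` with `e ∈ R`, and
`(a₁² - 4a₀) b₁² = 4α₀ - 2a₁α₁ - (α₁ b₁⁻¹)²` shows that `π²` divides `a₁² - 4a₀`.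
-/

namespace Polynomial

variable {R : Type*} [CommRing R]

theorem Monic.exists_dvd_sub_C_mul_X_add_C {A : R[X]} (hA : A.Monic) (hdeg : A.degree ≤ 2)
    (F : R[X]) : ∃ s t : R, A ∣ F - (C s * X + C t) := by
  nontriviality R
  have hrem : (F %ₘ A).degree ≤ 1 :=
    Order.le_of_lt_succ ((degree_modByMonic_lt F hA).trans_le hdeg)
  refine ⟨(F %ₘ A).coeff 1, (F %ₘ A).coeff 0, ⟨F /ₘ A, ?_⟩⟩
  rw [← eq_X_add_C_of_degree_le_one hrem]
  exact sub_eq_of_eq_add' (modByMonic_add_div F A).symm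

theorem eq_of_quadratic_dvd_linear_sub_sq {p q s t b₀ b₁ : R}
    (h : X ^ 2 + C p * X + C q ∣ C s * X + C t - (C b₁ * X + C b₀) ^ 2) :
    s = 2 * b₀ * b₁ - p * b₁ ^ 2 ∧ t = b₀ ^ 2 - q * b₁ ^ 2 := by
  nontriviality R
  have hA : (X ^ 2 + C p * X + C q).Monic := by monicity!
  have hAdeg : (X ^ 2 + C p * X + C q).degree = 2 := by compute_degree!
  -- adding `b₁² (X² + pX + q)` kills the `X²` term, leaving a multiple of degree `< 2`
  have hg : C s * X + C t - (C b₁ * X + C b₀) ^ 2 + C (b₁ ^ 2) * (X ^ 2 + C p * X + C q) =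
      C (s - (2 * b₀ * b₁ - p * b₁ ^ 2)) * X + C (t - (b₀ ^ 2 - q * b₁ ^ 2)) := by
    simp only [map_sub, map_mul, map_pow, map_ofNat]
    ring
  have hzero : C (s - (2 * b₀ * b₁ - p * b₁ ^ 2)) * X + C (t - (b₀ ^ 2 - q * b₁ ^ 2)) = 0 := by
    by_contra hne
    refine hA.not_dvd_of_degree_lt hne ?_ (hg ▸ dvd_add h (dvd_mul_left _ _))
    exact degree_linear_le.trans_lt (by rw [hAdeg]; norm_num)
  have h1 := congrArg (coeff · 1) hzero
  have h0 := congrArg (coeff · 0) hzero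
  simp only [coeff_add, coeff_C_mul, coeff_X_one, coeff_X_zero, coeff_C, if_true, if_false,
    one_ne_zero, mul_one, mul_zero, add_zero, zero_add, coeff_zero] at h1 h0
  exact ⟨sub_eq_zero.mp h1, sub_eq_zero.mp h0⟩

end Polynomial

theorem IsIntegrallyClosed.isInteger_of_isInteger_sq {R L : Type*} [CommRing R] [Field L]
    [Algebra R L] [IsFractionRing R L] [IsIntegrallyClosed R] {x : L}
    (h : IsLocalization.IsInteger R (x ^ 2)) : IsLocalization.IsInteger R x := by
  obtain ⟨r, hr⟩ := h
  exact IsIntegrallyClosed.isIntegral_iff.mp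
    (IsIntegral.of_pow two_pos (hr ▸ isIntegral_algebraMap))

theorem IsDiscreteValuationRing.exists_algebraMap_uniformizer_mul_eq_inv {R L : Type*}
    [CommRing R] [IsDomain R] [IsDiscreteValuationRing R] [Field L] [Algebra R L] [IsFractionRing R L]
    {π : R} (hπ : Irreducible π) {x : L} (hx : ¬ IsLocalization.IsInteger R x) :
    ∃ e : R, algebraMap R L (π * e) = x⁻¹ := by
  obtain hx' | ⟨z, hz⟩ := ValuationRing.isInteger_or_isInteger R x
  · exact absurd hx' hx
  have hz_mem : z ∈ IsLocalRing.maximalIdeal R := by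
    refine (IsLocalRing.mem_maximalIdeal z).mpr fun hu => hx ⟨↑hu.unit⁻¹, ?_⟩
    rw [map_units_inv, IsUnit.unit_spec, hz, inv_inv]
  rw [(irreducible_iff_uniformizer π).mp hπ, Ideal.mem_span_singleton'] at hz_mem
  obtain ⟨e, rfl⟩ := hz_mem
  exact ⟨e, by rw [mul_comm, hz]⟩

open Polynomial in
theorem stmt_10_general {R L : Type*} [CommRing R] [IsDomain R] [IsDiscreteValuationRing R]
    [Field L] [Algebra R L] [IsFractionRing R L]
    (π : R) (hπ : Irreducible π)
    (F : R[X])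
    (a0 a1 : R) (b0 b1 : L)
    (hdiv : (X ^ 2 + C (algebraMap R L a1) * X + C (algebraMap R L a0)) ∣
      (F.map (algebraMap R L) - (C b1 * X + C b0) ^ 2))
    (hb : ¬ (IsLocalization.IsInteger R b0 ∧ IsLocalization.IsInteger R b1)) :
    ¬ IsLocalization.IsInteger R b1 ∧ π ^ 2 ∣ (a1 ^ 2 - 4 * a0) := by
  obtain ⟨α₁, α₀, hrem⟩ :=
    (show (X ^ 2 + C a1 * X + C a0).Monic by monicity!).exists_dvd_sub_C_mul_X_add_C
      (by compute_degree) F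
  replace hrem := Polynomial.map_dvd (algebraMap R L) hrem
  simp only [Polynomial.map_sub, Polynomial.map_add, Polynomial.map_mul, Polynomial.map_pow,
    map_X, map_C] at hrem
  have hlin := dvd_sub hdiv hrem
  rw [sub_sub_sub_cancel_left] at hlin
  obtain ⟨hα₁, hα₀⟩ := eq_of_quadratic_dvd_linear_sub_sq hlin
  have hb₁ : ¬ IsLocalization.IsInteger R b1 := by
    rintro ⟨β, hβ⟩
    refine hb ⟨IsIntegrallyClosed.isInteger_of_isInteger_sq ⟨α₀ + a0 * β ^ 2, ?_⟩, β, hβ⟩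
    rw [map_add, map_mul, map_pow, hβ, hα₀]
    ring
  refine ⟨hb₁, ?_⟩
  obtain ⟨e, he⟩ := IsDiscreteValuationRing.exists_algebraMap_uniformizer_mul_eq_inv hπ hb₁
  have hb₁0 : b1 ≠ 0 := fun h => hb₁ ⟨0, by simp [h]⟩
  refine ⟨e ^ 2 * (4 * α₀ - 2 * a1 * α₁ - (α₁ * π * e) ^ 2), IsFractionRing.injective R L ?_⟩
  simp only [map_sub, map_mul, map_pow, map_ofNat] at he ⊢
  calc _ = b1⁻¹ ^ 2 * (4 * algebraMap R L α₀ - 2 * algebraMap R L a1 * algebraMap R L α₁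
          - (algebraMap R L α₁ * b1⁻¹) ^ 2) := by
        rw [hα₁, hα₀]
        field_simp
        ring
    _ = _ := by rw [← he]; ring

open Polynomial in
theorem stmt_10 {R L : Type*} [CommRing R] [IsDomain R] [IsDiscreteValuationRing R]
    [Field L] [Algebra R L] [IsFractionRing R L]
    (π : R) (hπ : Irreducible π) (h2 : IsUnit (2 : R))
    (F : R[X]) (hF : F.natDegree ≤ 6)
    (a0 a1 : R) (b0 b1 : L)
    (hdiv : (X ^ 2 + C (algebraMap R L a1) * X + C (algebraMap R L a0)) ∣
      (F.map (algebraMap R L) - (C b1 * X + C b0) ^ 2))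
    (hb : ¬ (IsLocalization.IsInteger R b0 ∧ IsLocalization.IsInteger R b1)) :
    ¬ IsLocalization.IsInteger R b1 ∧ π ^ 2 ∣ (a1 ^ 2 - 4 * a0) :=
  stmt_10_general π hπ F a0 a1 b0 b1 hdiv hb
end
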